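/- Among all functions f in the set G = { f : {0,1,2,3}^d → R≥0 such that for every x, Σ_{u∈{0,1}^d} f(x+u) = 1 (coordinates mod 4) }, the second moment E(N_z(f)²) is maximized by the indicator function of {0,2}^d (the regular cube tiling); i.e., for all f ∈ G, E(N_z(f)²) ≤ (5/2)^d, where N_z(f) = Σ_{u∈{0,1,2}^d} f(z+u) and E denotes the average over z ∈ {0,1,2,3}^d. -/

import Mathlib

open Finset


/-- `N_z(f)`: sum of `f` over the translate `z + {0,1,2}^d`. -/
noncomputable def Nz {d : ℕ} (f : (Fin d → ZMod 4) → ℝ) (z : Fin d → ZMod 4) : ℝ :=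
  ∑ u ∈ Finset.univ.filter
      (fun u : Fin d → ZMod 4 => ∀ i, u i = 0 ∨ u i = 1 ∨ u i = 2),
    f (z + u)

namespace SMhelp

variable {d : ℕ}

/-- embedding of {0,1,2}-labels into ZMod 4 -/
def ι3 (b : Fin d → Fin 3) : Fin d → ZMod 4 := fun i => ((b i : ℕ) : ZMod 4)

lemma card_filter_pi {ι α : Type*} [Fintype ι] [DecidableEq ι] [Fintype α] [DecidableEq α]
    (P : ι → α → Prop) [∀ i, DecidablePred (P i)] :
    (Finset.univ.filter (fun v : ι → α => ∀ i, P i (v i))).card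
      = ∏ i, (Finset.univ.filter (P i)).card := by
  rw [← Fintype.card_subtype]
  rw [Fintype.card_congr (Equiv.subtypePiEquivPi (p := fun i t => P i t))]
  rw [Fintype.card_pi]
  simp [Fintype.card_subtype]

def inv3 : ZMod 4 → Fin 3 := fun t => if t = 0 then 0 else if t = 1 then 1 else 2

lemma inv3_spec : ∀ t : ZMod 4, (t = 0 ∨ t = 1 ∨ t = 2) → ((inv3 t : ℕ) : ZMod 4) = t := by
  decide

def vOf (y : Fin d → ZMod 4) : Fin d → ZMod 4 := fun i => if y i = 0 ∨ y i = 1 then 0 else 2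

/-- the "slice" filter: coordinates in S are 0 -/
def sliceF (S : Finset (Fin d)) : Finset (Fin d → ZMod 4) :=
  Finset.univ.filter (fun y => ∀ i ∈ S, y i = 0)

def VS (S : Finset (Fin d)) : Finset (Fin d → ZMod 4) :=
  Finset.univ.filter (fun v => ∀ i, (i ∈ S → v i = 0) ∧ (i ∉ S → v i = 0 ∨ v i = 2))

def CS (S : Finset (Fin d)) : Finset (Fin d → ZMod 4) :=
  Finset.univ.filter (fun u => ∀ i, (i ∈ S → u i = 0) ∧ (i ∉ S → u i = 0 ∨ u i = 1))

lemma partition_sliceF (S : Finset (Fin d)) (g : (Fin d → ZMod 4) → ℝ) :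
    ∑ y ∈ sliceF S, g y = ∑ v ∈ VS S, ∑ u ∈ CS S, g (v + u) := by
  rw [← Finset.sum_product' (VS S) (CS S) (fun v u => g (v + u))]
  have h1 : ∀ t : ZMod 4, t - (if t = 0 ∨ t = 1 then (0:ZMod 4) else 2) = 0 ∨
      t - (if t = 0 ∨ t = 1 then (0:ZMod 4) else 2) = 1 := by decide
  have h2 : ∀ a b : ZMod 4, (a = 0 ∨ a = 2) → (b = 0 ∨ b = 1) →
      (if a + b = 0 ∨ a + b = 1 then (0:ZMod 4) else 2) = a := by decide
  refine Finset.sum_nbij' (fun y => ((vOf y, y - vOf y) : _ × _)) (fun p => p.1 + p.2)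
    ?_ ?_ ?_ ?_ ?_
  · -- y ∈ slice → (vOf y, y - vOf y) ∈ VS ×ˢ CS
    intro y hy
    simp only [sliceF, mem_filter, mem_univ, true_and] at hy
    simp only [mem_product, VS, CS, mem_filter, mem_univ, true_and]
    constructor
    · intro i
      constructor
      · intro hi; simp [vOf, hy i hi]
      · intro _; unfold vOf; split <;> simp
    · intro i
      constructor
      · intro hi
        have : vOf y i = 0 := by simp [vOf, hy i hi]
        simp [Pi.sub_apply, this, hy i hi]
      · intro _
        exact h1 (y i)
  · -- (v,u) ∈ VS ×ˢ CS → v + u ∈ slice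
    rintro ⟨v, u⟩ hp
    simp only [mem_product, VS, CS, mem_filter, mem_univ, true_and] at hp
    simp only [sliceF, mem_filter, mem_univ, true_and]
    intro i hi
    simp [Pi.add_apply, (hp.1 i).1 hi, (hp.2 i).1 hi]
  · -- left inverse
    intro y _; simp
  · -- right inverse
    rintro ⟨v, u⟩ hp
    simp only [mem_product, VS, CS, mem_filter, mem_univ, true_and] at hp
    have hv : vOf (v + u) = v := by
      funext i
      have hvi : v i = 0 ∨ v i = 2 := by
        by_cases hi : i ∈ S
        · exact Or.inl ((hp.1 i).1 hi)
        · exact (hp.1 i).2 hi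
      have hui : u i = 0 ∨ u i = 1 := by
        by_cases hi : i ∈ S
        · exact Or.inl ((hp.2 i).1 hi)
        · exact (hp.2 i).2 hi
      simpa [vOf, Pi.add_apply] using h2 (v i) (u i) hvi hui
    dsimp only
    rw [hv]
    simp
  · intro y _; simp

lemma card_VS (S : Finset (Fin d)) : (VS S).card = 2 ^ Sᶜ.card := by
  unfold VS
  have h := card_filter_pi (ι := Fin d) (α := ZMod 4)
    (fun i t => (i ∈ S → t = 0) ∧ (i ∉ S → t = 0 ∨ t = 2))
  refine Eq.trans ?_ (h.trans ?_)
  · congr!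
  have : ∀ i, (Finset.univ.filter (fun t : ZMod 4 =>
      (i ∈ S → t = 0) ∧ (i ∉ S → t = 0 ∨ t = 2))).card = if i ∈ S then 1 else 2 := by
    intro i
    by_cases hi : i ∈ S <;> simp [hi] <;> decide
  simp only [this]
  rw [Finset.prod_ite (fun _ => 1) (fun _ => 2), Finset.prod_const_one, Finset.prod_const, one_mul]
  congr 1
  rw [Finset.compl_eq_univ_sdiff]
  congr 1
  ext i; simp

end SMhelp

open SMhelp

section main

variable {d : ℕ} (f : (Fin d → ZMod 4) → ℝ)

lemma cube_subset_sum (hnn : ∀ x, 0 ≤ f x)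
    (hsum : ∀ x : Fin d → ZMod 4,
      (∑ u ∈ Finset.univ.filter (fun u : Fin d → ZMod 4 => ∀ i, u i = 0 ∨ u i = 1),
        f (x + u)) = 1) (S : Finset (Fin d)) (x : Fin d → ZMod 4) :
    ∑ u ∈ CS S, f (x + u) ≤ 1 := by
  rw [← hsum x]
  apply Finset.sum_le_sum_of_subset_of_nonneg
  · intro u hu
    simp only [CS, mem_filter, mem_univ, true_and] at hu ⊢
    intro i
    by_cases hi : i ∈ S
    · exact Or.inl ((hu i).1 hi)
    · exact (hu i).2 hi
  · intro u _ _; exact hnn _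

lemma slice_bound (hnn : ∀ x, 0 ≤ f x)
    (hsum : ∀ x : Fin d → ZMod 4,
      (∑ u ∈ Finset.univ.filter (fun u : Fin d → ZMod 4 => ∀ i, u i = 0 ∨ u i = 1),
        f (x + u)) = 1) (S : Finset (Fin d)) (x : Fin d → ZMod 4) :
    ∑ y ∈ sliceF S, f (x + y) ≤ (2:ℝ) ^ Sᶜ.card := by
  rw [partition_sliceF S (fun y => f (x + y))]
  calc ∑ v ∈ VS S, ∑ u ∈ CS S, f (x + (v + u))
      ≤ ∑ v ∈ VS S, 1 := by
        apply Finset.sum_le_sum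
        intro v _
        have := cube_subset_sum f hnn hsum S (x + v)
        simpa [add_assoc] using this
    _ = (2:ℝ) ^ Sᶜ.card := by
        rw [Finset.sum_const, card_VS, nsmul_eq_mul]
        push_cast
        ring

lemma total_sum
    (hsum : ∀ x : Fin d → ZMod 4,
      (∑ u ∈ Finset.univ.filter (fun u : Fin d → ZMod 4 => ∀ i, u i = 0 ∨ u i = 1),
        f (x + u)) = 1) :
    ∑ x : Fin d → ZMod 4, f x = 2 ^ d := by
  have h0 : sliceF (∅ : Finset (Fin d)) = Finset.univ := by
    simp [sliceF]
  have h1 : ∑ y ∈ sliceF (∅ : Finset (Fin d)), f y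
      = ∑ v ∈ VS (∅ : Finset (Fin d)), ∑ u ∈ CS (∅ : Finset (Fin d)), f (v + u) :=
    partition_sliceF ∅ f
  have hCS : CS (∅ : Finset (Fin d)) =
      Finset.univ.filter (fun u : Fin d → ZMod 4 => ∀ i, u i = 0 ∨ u i = 1) := by
    apply Finset.filter_congr
    intro u _
    simp
  rw [h0] at h1
  rw [h1]
  have : ∀ v ∈ VS (∅ : Finset (Fin d)), ∑ u ∈ CS (∅ : Finset (Fin d)), f (v + u) = 1 := by
    intro v _
    rw [hCS]
    exact hsum v
  rw [Finset.sum_congr rfl this, Finset.sum_const, card_VS, nsmul_eq_mul]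
  simp

end main


set_option maxHeartbeats 1000000

theorem second_moment_maximized_by_regular_tiling (d : ℕ)
    (f : (Fin d → ZMod 4) → ℝ) (hnn : ∀ x, 0 ≤ f x)
    (hsum : ∀ x : Fin d → ZMod 4,
      (∑ u ∈ Finset.univ.filter
          (fun u : Fin d → ZMod 4 => ∀ i, u i = 0 ∨ u i = 1),
        f (x + u)) = 1) :
    (1 / 4 ^ d) * ∑ z : Fin d → ZMod 4, (Nz f z) ^ 2 ≤ ((5 : ℝ) / 2) ^ d := by
  classical
  set A : (Fin d → ZMod 4) → ℝ := fun w => ∑ x : Fin d → ZMod 4, f x * f (x + w) with hA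
  -- rewrite Nz as a sum over labels
  have himg : Finset.univ.filter
      (fun u : Fin d → ZMod 4 => ∀ i, u i = 0 ∨ u i = 1 ∨ u i = 2)
      = Finset.image ι3 Finset.univ := by
    ext u
    simp only [mem_filter, mem_univ, true_and, Finset.mem_image]
    constructor
    · intro h
      refine ⟨fun i => inv3 (u i), ?_⟩
      funext i
      exact inv3_spec _ (h i)
    · rintro ⟨b, rfl⟩ i
      have : ∀ a : Fin 3, ((a:ℕ):ZMod 4) = 0 ∨ ((a:ℕ):ZMod 4) = 1 ∨ ((a:ℕ):ZMod 4) = 2 := by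
        decide
      exact this (b i)
  have hinj : Function.Injective (ι3 (d := d)) := by
    intro a b hab
    funext i
    have h3 : ∀ x y : Fin 3, ((x:ℕ):ZMod 4) = ((y:ℕ):ZMod 4) → x = y := by decide
    exact h3 _ _ (congrFun hab i)
  have hN : ∀ z, Nz f z = ∑ b : Fin d → Fin 3, f (z + ι3 b) := by
    intro z
    rw [Nz, himg, Finset.sum_image (fun a _ b _ h => hinj h)]
  set wfun : (Fin d → Fin 3 × Fin 3) → (Fin d → ZMod 4) :=
    fun q i => (((q i).2 : ℕ) : ZMod 4) - (((q i).1 : ℕ) : ZMod 4) with hwfun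
  have step1 : ∑ z : Fin d → ZMod 4, (Nz f z) ^ 2
      = ∑ q : Fin d → Fin 3 × Fin 3, A (wfun q) := by
    calc ∑ z : Fin d → ZMod 4, (Nz f z) ^ 2
        = ∑ z : Fin d → ZMod 4, ∑ b : Fin d → Fin 3, ∑ b' : Fin d → Fin 3,
            f (z + ι3 b) * f (z + ι3 b') := by
          simp only [hN, sq, Finset.sum_mul_sum]
      _ = ∑ b : Fin d → Fin 3, ∑ b' : Fin d → Fin 3, ∑ z : Fin d → ZMod 4,
            f (z + ι3 b) * f (z + ι3 b') := by
          rw [Finset.sum_comm]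
          exact Finset.sum_congr rfl fun b _ => Finset.sum_comm
      _ = ∑ b : Fin d → Fin 3, ∑ b' : Fin d → Fin 3, A (ι3 b' - ι3 b) := by
          refine Finset.sum_congr rfl fun b _ => Finset.sum_congr rfl fun b' _ => ?_
          refine Fintype.sum_equiv (Equiv.addRight (ι3 b)) _ _ fun z => ?_
          simp only [hA, Equiv.coe_addRight]
          congr 2
          abel
      _ = ∑ p : (Fin d → Fin 3) × (Fin d → Fin 3), A (ι3 p.2 - ι3 p.1) :=
          (Fintype.sum_prod_type
            (fun p : (Fin d → Fin 3) × (Fin d → Fin 3) => A (ι3 p.2 - ι3 p.1))).symm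
      _ = ∑ q : Fin d → Fin 3 × Fin 3, A (wfun q) :=
          (Fintype.sum_equiv (Equiv.arrowProdEquivProdArrow (Fin d) (fun _ => Fin 3) (fun _ => Fin 3))
            _ _ fun q => by congr 1).symm
  have hcard1 : ∀ t : ZMod 4,
      (Finset.univ.filter (fun a : Fin 3 × Fin 3 =>
        ((a.2 : ℕ) : ZMod 4) - ((a.1 : ℕ) : ZMod 4) = t)).card = if t = 0 then 3 else 2 := by
    decide
  have count : ∀ w : Fin d → ZMod 4,
      ((Finset.univ.filter (fun q => wfun q = w)).card : ℝ)
        = ∏ i, (if w i = 0 then (3:ℝ) else 2) := by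
    intro w
    have e1 : Finset.univ.filter (fun q : Fin d → Fin 3 × Fin 3 => wfun q = w)
        = Finset.univ.filter (fun q : Fin d → Fin 3 × Fin 3 =>
            ∀ i, ((((q i).2 : ℕ) : ZMod 4) - (((q i).1 : ℕ) : ZMod 4) = w i)) := by
      apply Finset.filter_congr
      intro q _
      rw [funext_iff]
    have h := card_filter_pi (ι := Fin d) (α := Fin 3 × Fin 3)
      (fun i a => ((a.2 : ℕ) : ZMod 4) - ((a.1 : ℕ) : ZMod 4) = w i)
    have e2 : (Finset.univ.filter (fun q : Fin d → Fin 3 × Fin 3 =>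
            ∀ i, ((((q i).2 : ℕ) : ZMod 4) - (((q i).1 : ℕ) : ZMod 4) = w i))).card
        = ∏ i, (if w i = 0 then 3 else 2 : ℕ) := by
      refine Eq.trans ?_ (h.trans ?_)
      · congr!
      exact Finset.prod_congr rfl fun i _ => hcard1 (w i)
    rw [e1, e2]
    push_cast [apply_ite (Nat.cast : ℕ → ℝ)]
    rfl
  have step2 : ∀ w : Fin d → ZMod 4,
      (∏ i, (if w i = 0 then (3:ℝ) else 2))
        = ∑ S : Finset (Fin d), (if ∀ i ∈ S, w i = 0 then (2:ℝ) ^ Sᶜ.card else 0) := by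
    intro w
    have e1 : ∀ i : Fin d, (if w i = 0 then (3:ℝ) else 2)
        = (if w i = 0 then (1:ℝ) else 0) + 2 := by
      intro i; split <;> norm_num
    rw [Finset.prod_congr rfl fun i _ => e1 i, Finset.prod_add, Finset.powerset_univ]
    refine Finset.sum_congr rfl fun S _ => ?_
    rw [Finset.prod_boole, Finset.prod_const, ← Finset.compl_eq_univ_sdiff]
    split <;> simp
  have fiber : ∑ q : Fin d → Fin 3 × Fin 3, A (wfun q)
      = ∑ w : Fin d → ZMod 4, ((Finset.univ.filter (fun q => wfun q = w)).card : ℝ) * A w := by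
    calc ∑ q : Fin d → Fin 3 × Fin 3, A (wfun q)
        = ∑ q : Fin d → Fin 3 × Fin 3, ∑ w : Fin d → ZMod 4,
            if wfun q = w then A w else 0 := by
          refine Finset.sum_congr rfl fun q _ => ?_
          rw [Finset.sum_ite_eq Finset.univ (wfun q) A]
          simp
      _ = ∑ w : Fin d → ZMod 4, ∑ q : Fin d → Fin 3 × Fin 3,
            if wfun q = w then A w else 0 := Finset.sum_comm
      _ = _ := by
          refine Finset.sum_congr rfl fun w _ => ?_
          rw [← Finset.sum_filter, Finset.sum_const, nsmul_eq_mul]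
  have regroup : ∑ w : Fin d → ZMod 4,
        (∑ S : Finset (Fin d), (if ∀ i ∈ S, w i = 0 then (2:ℝ) ^ Sᶜ.card else 0)) * A w
      = ∑ S : Finset (Fin d), (2:ℝ) ^ Sᶜ.card * ∑ w ∈ sliceF S, A w := by
    calc ∑ w : Fin d → ZMod 4,
          (∑ S : Finset (Fin d), (if ∀ i ∈ S, w i = 0 then (2:ℝ) ^ Sᶜ.card else 0)) * A w
        = ∑ w : Fin d → ZMod 4, ∑ S : Finset (Fin d),
            (if ∀ i ∈ S, w i = 0 then (2:ℝ) ^ Sᶜ.card * A w else 0) := by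
          refine Finset.sum_congr rfl fun w _ => ?_
          rw [Finset.sum_mul]
          exact Finset.sum_congr rfl fun S _ => by rw [ite_mul, zero_mul]
      _ = ∑ S : Finset (Fin d), ∑ w : Fin d → ZMod 4,
            (if ∀ i ∈ S, w i = 0 then (2:ℝ) ^ Sᶜ.card * A w else 0) := Finset.sum_comm
      _ = _ := by
          refine Finset.sum_congr rfl fun S _ => ?_
          rw [Finset.mul_sum, sliceF, Finset.sum_filter]
  have Bbound : ∀ S : Finset (Fin d),
      ∑ w ∈ sliceF S, A w ≤ (2:ℝ) ^ Sᶜ.card * 2 ^ d := by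
    intro S
    have e : ∑ w ∈ sliceF S, A w = ∑ x : Fin d → ZMod 4, f x * ∑ y ∈ sliceF S, f (x + y) := by
      rw [hA, Finset.sum_comm]
      exact Finset.sum_congr rfl fun x _ => (Finset.mul_sum _ _ _).symm
    rw [e]
    calc ∑ x : Fin d → ZMod 4, f x * ∑ y ∈ sliceF S, f (x + y)
        ≤ ∑ x : Fin d → ZMod 4, f x * (2:ℝ) ^ Sᶜ.card := by
          refine Finset.sum_le_sum fun x _ => ?_
          exact mul_le_mul_of_nonneg_left (slice_bound f hnn hsum S x) (hnn x)
      _ = (2:ℝ) ^ Sᶜ.card * 2 ^ d := by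
          rw [← Finset.sum_mul, total_sum f hsum]; ring
  have hA0 : ∀ w, 0 ≤ A w := fun w => Finset.sum_nonneg fun x _ => mul_nonneg (hnn x) (hnn _)
  have h5 : ∑ S : Finset (Fin d), (4:ℝ) ^ Sᶜ.card = 5 ^ d := by
    have e : ((5:ℝ)) ^ d = ∏ _i : Fin d, ((1:ℝ) + 4) := by norm_num
    rw [e, Finset.prod_add, Finset.powerset_univ]
    refine (Finset.sum_congr rfl fun S _ => ?_).symm
    rw [Finset.prod_const_one, Finset.prod_const, one_mul, ← Finset.compl_eq_univ_sdiff]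
  have main : ∑ z : Fin d → ZMod 4, (Nz f z) ^ 2 ≤ 2 ^ d * 5 ^ d := by
    rw [step1, fiber]
    have e : ∑ w : Fin d → ZMod 4, ((Finset.univ.filter (fun q => wfun q = w)).card : ℝ) * A w
        = ∑ S : Finset (Fin d), (2:ℝ) ^ Sᶜ.card * ∑ w ∈ sliceF S, A w := by
      rw [← regroup]
      exact Finset.sum_congr rfl fun w _ => by rw [count w, step2 w]
    rw [e]
    calc ∑ S : Finset (Fin d), (2:ℝ) ^ Sᶜ.card * ∑ w ∈ sliceF S, A w
        ≤ ∑ S : Finset (Fin d), (2:ℝ) ^ Sᶜ.card * ((2:ℝ) ^ Sᶜ.card * 2 ^ d) := by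
          refine Finset.sum_le_sum fun S _ => ?_
          exact mul_le_mul_of_nonneg_left (Bbound S) (by positivity)
      _ = 2 ^ d * ∑ S : Finset (Fin d), (4:ℝ) ^ Sᶜ.card := by
          rw [Finset.mul_sum]
          refine Finset.sum_congr rfl fun S _ => ?_
          rw [show ((4:ℝ)) = 2 * 2 by norm_num, mul_pow]
          ring
      _ = 2 ^ d * 5 ^ d := by rw [h5]
  have h4 : (0:ℝ) < 1 / 4 ^ d := by positivity
  calc (1 / 4 ^ d) * ∑ z : Fin d → ZMod 4, (Nz f z) ^ 2
      ≤ (1 / 4 ^ d) * (2 ^ d * 5 ^ d) := by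
        exact mul_le_mul_of_nonneg_left main (le_of_lt h4)
    _ = ((5:ℝ) / 2) ^ d := by
        rw [div_pow]
        have h2 : ((4:ℝ)) ^ d = 2 ^ d * 2 ^ d := by rw [← mul_pow]; norm_num
        field_simp [h2]
        rw [h2]; ring
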